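/- arXiv:1906.11441 — 6 statements merged into one kernel-verified Lean document; each statement's English description precedes it below -/
import Mathlib

section
/- Let t > 0, let x ≤ y ≤ z be real numbers with z − x ≤ 2t, and let r_1, …, r_s be any real numbers. Then the Hamming distances between the BV encodings satisfy d_H(BV(x), BV(z)) = d_H(BV(x), BV(y)) + d_H(BV(y), BV(z)). -/
/-- The BV hash: `h_{r,t}(x) = 1` if `x ∈ [r - t, r + t]` and `0` otherwise. -/
noncomputable def bvHash (t r x : ℝ) : ℕ := if x ∈ Set.Icc (r - t) (r + t) then 1 else 0

/-- The BV encoding of `x` with random values `r 0, …, r (s-1)`. -/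
noncomputable def bvEncode (t : ℝ) {s : ℕ} (r : Fin s → ℝ) (x : ℝ) : Fin s → ℕ :=
  fun i => bvHash t (r i) x

/-- Hamming distance: the number of coordinates in which two vectors differ. -/
noncomputable def bvHammingDist {s : ℕ} (u v : Fin s → ℕ) : ℕ :=
  (Finset.univ.filter fun i => u i ≠ v i).card


lemma bv_key (t r x y z : ℝ) (ht : 0 < t) (hxy : x ≤ y) (hyz : y ≤ z)
    (hloc : z - x ≤ 2 * t) :
    ¬(bvHash t r x ≠ bvHash t r y ∧ bvHash t r y ≠ bvHash t r z) := by
  rintro ⟨h1, h2⟩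
  unfold bvHash at h1 h2
  by_cases hx : x ∈ Set.Icc (r - t) (r + t) <;>
  by_cases hy : y ∈ Set.Icc (r - t) (r + t) <;>
  by_cases hz : z ∈ Set.Icc (r - t) (r + t) <;>
  simp only [hx, hy, hz, if_true, if_false, if_pos, if_neg, ne_eq, not_true, not_false_iff] at h1 h2 <;>
  simp only [Set.mem_Icc, not_and_or, not_le] at hx hy hz <;>
  first
  | exact h1 rfl
  | exact h2 rfl
  | (rcases hy with hy | hy <;> linarith [hx.1, hx.2, hz.1, hz.2])
  | (rcases hx with hx | hx <;> rcases hz with hz | hz <;> linarith [hy.1, hy.2])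

/-- For `t > 0`, `x ≤ y ≤ z` with `z - x ≤ 2t`, and any reals `r 0, …, r (s-1)`, the Hamming
distances between the BV encodings satisfy
`d_H(BV(x), BV(z)) = d_H(BV(x), BV(y)) + d_H(BV(y), BV(z))`. -/
theorem bv_bvHammingDist_consistent
    (t : ℝ) (ht : 0 < t) (x y z : ℝ) (hxy : x ≤ y) (hyz : y ≤ z)
    (hloc : z - x ≤ 2 * t) (s : ℕ) (r : Fin s → ℝ) :
    bvHammingDist (bvEncode t r x) (bvEncode t r z)
      = bvHammingDist (bvEncode t r x) (bvEncode t r y)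
        + bvHammingDist (bvEncode t r y) (bvEncode t r z) := by
  classical
  unfold bvHammingDist
  have key : ∀ i : Fin s, ¬(bvEncode t r x i ≠ bvEncode t r y i ∧ bvEncode t r y i ≠ bvEncode t r z i) :=
    fun i => bv_key t (r i) x y z ht hxy hyz hloc
  have hset : (Finset.univ.filter fun i => bvEncode t r x i ≠ bvEncode t r z i)
      = (Finset.univ.filter fun i => bvEncode t r x i ≠ bvEncode t r y i)
        ∪ (Finset.univ.filter fun i => bvEncode t r y i ≠ bvEncode t r z i) := by
    ext i
    simp only [Finset.mem_filter, Finset.mem_union, Finset.mem_univ, true_and]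
    constructor
    · intro h
      by_contra hc
      push_neg at hc
      exact h (hc.1.symm ▸ hc.2 ▸ rfl)
    · intro h hxz
      rcases h with h | h
      · exact key i ⟨h, fun hb => h (hxz.trans hb.symm)⟩
      · exact key i ⟨fun ha => h (ha.symm.trans hxz), h⟩
  rw [hset, Finset.card_union_of_disjoint]
  rw [Finset.disjoint_filter]
  intro i _ h1 h2
  exact key i ⟨h1, h2⟩
end

section
/- (Distance consistence) Let t > 0, let μ > 0 and s ≥ 1, let x ≤ y ≤ z be real numbers with z − x ≤ 2t, and let r_1, …, r_s be any real numbers. Define the estimated Euclidean distance between two values u, v by d̂_E(u, v) = μ · d_H(BV(u), BV(v)) / (2s). Then d̂_E(x, z) = d̂_E(x, y) + d̂_E(y, z). -/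
/-- The estimated Euclidean distance `d̂_E(u, v) = μ · d_H(BV(u), BV(v)) / (2s)`. -/
noncomputable def estDist (t μ : ℝ) {s : ℕ} (r : Fin s → ℝ) (u v : ℝ) : ℝ :=
  μ * (bvHammingDist (bvEncode t r u) (bvEncode t r v) : ℝ) / (2 * s)

lemma ham_add
    (t : ℝ) (s : ℕ)
    (x y z : ℝ) (hxy : x ≤ y) (hyz : y ≤ z) (hloc : z - x ≤ 2 * t)
    (r : Fin s → ℝ) :
    (bvHammingDist (bvEncode t r x) (bvEncode t r z) : ℕ)
      = bvHammingDist (bvEncode t r x) (bvEncode t r y)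
        + bvHammingDist (bvEncode t r y) (bvEncode t r z) := by
  unfold bvHammingDist bvEncode bvHash
  simp only [Finset.card_filter]
  rw [← Finset.sum_add_distrib]
  refine Finset.sum_congr rfl fun i _ => ?_
  by_cases ha : x ∈ Set.Icc (r i - t) (r i + t) <;>
  by_cases hb : y ∈ Set.Icc (r i - t) (r i + t) <;>
  by_cases hc : z ∈ Set.Icc (r i - t) (r i + t) <;>
  simp [ha, hb, hc]
  · -- a ∧ ¬b ∧ c : contradiction
    exact absurd ⟨le_trans ha.1 hxy, le_trans hyz hc.2⟩ hb
  · -- ¬a ∧ b ∧ ¬c : contradiction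
    rcases lt_or_ge x (r i - t) with h1 | h1
    · rcases lt_or_ge (r i + t) z with h2 | h2
      · linarith
      · exact absurd ⟨le_trans hb.1 hyz, h2⟩ hc
    · exact absurd ⟨h1, le_trans hxy hb.2⟩ ha

/-- (Distance consistence) For `t > 0`, `μ > 0`, `s ≥ 1`, `x ≤ y ≤ z` with `z - x ≤ 2t`, and
any reals `r 0, …, r (s-1)`, the estimated Euclidean distances satisfy
`d̂_E(x, z) = d̂_E(x, y) + d̂_E(y, z)`. -/
theorem bv_estDist_consistent
    (t μ : ℝ) (ht : 0 < t) (hμ : 0 < μ) (s : ℕ) (hs : 1 ≤ s)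
    (x y z : ℝ) (hxy : x ≤ y) (hyz : y ≤ z) (hloc : z - x ≤ 2 * t)
    (r : Fin s → ℝ) :
    estDist t μ r x z = estDist t μ r x y + estDist t μ r y z := by
  unfold estDist
  rw [ham_add t s x y z hxy hyz hloc r]
  push_cast
  ring
end

section
/- Fix reals L < U and t > 0, and set μ = U − L + 2t. If r is a random variable uniformly distributed on [L − t, U + t], then for all x, y ∈ [L, U] the probability that h_{r,t}(x) ≠ h_{r,t}(y) equals 2 · min(|x − y|, 2t) / μ. -/
open MeasureTheory

/-- The uniform probability measure on the interval `[a, b]`. -/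
noncomputable def uniformIcc (a b : ℝ) : Measure ℝ :=
  (ENNReal.ofReal (b - a))⁻¹ • (volume.restrict (Set.Icc a b))

lemma vol_symmDiff_le (t a b : ℝ) (ht : 0 < t) (hab : a ≤ b) :
    volume (symmDiff (Set.Icc (a-t) (a+t)) (Set.Icc (b-t) (b+t)))
      = ENNReal.ofReal (2 * min (b-a) (2*t)) := by
  set A := Set.Icc (a-t) (a+t)
  set B := Set.Icc (b-t) (b+t)
  have hI : A ∩ B = Set.Icc (b-t) (a+t) := by
    rw [Set.Icc_inter_Icc, max_eq_right (by linarith), min_eq_left (by linarith)]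
  have hvi : volume (A ∩ B) = ENNReal.ofReal (2*t - (b-a)) := by
    rw [hI, Real.volume_Icc]; ring_nf
  have hfin : volume (A ∩ B) ≠ ⊤ := by rw [hvi]; exact ENNReal.ofReal_ne_top
  have hdA : volume (A \ B) = ENNReal.ofReal (2*t) - ENNReal.ofReal (2*t - (b-a)) := by
    have : A \ B = A \ (A ∩ B) := by simp
    rw [this, measure_diff Set.inter_subset_left
      ((measurableSet_Icc.inter measurableSet_Icc).nullMeasurableSet) hfin, hvi]
    congr 1
    rw [Real.volume_Icc]; ring_nf
  have hdB : volume (B \ A) = ENNReal.ofReal (2*t) - ENNReal.ofReal (2*t - (b-a)) := by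
    have : B \ A = B \ (A ∩ B) := by simp
    rw [this, measure_diff Set.inter_subset_right
      ((measurableSet_Icc.inter measurableSet_Icc).nullMeasurableSet) hfin, hvi]
    congr 1
    rw [Real.volume_Icc]; ring_nf
  have hU : symmDiff A B = (A \ B) ∪ (B \ A) := Set.symmDiff_def A B
  rw [hU, measure_union disjoint_sdiff_sdiff (measurableSet_Icc.diff measurableSet_Icc),
    hdA, hdB]
  rcases le_total (b - a) (2*t) with h | h
  · rw [min_eq_left h, ← ENNReal.ofReal_sub _ (by linarith)]
    rw [← ENNReal.ofReal_add (by linarith) (by linarith)]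
    congr 1; ring
  · rw [min_eq_right h, ENNReal.ofReal_of_nonpos (show 2*t-(b-a) ≤ 0 by linarith), tsub_zero,
      ← ENNReal.ofReal_add (by linarith) (by linarith)]
    congr 1; ring

lemma vol_symmDiff (t a b : ℝ) (ht : 0 < t) :
    volume (symmDiff (Set.Icc (a-t) (a+t)) (Set.Icc (b-t) (b+t)))
      = ENNReal.ofReal (2 * min |a-b| (2*t)) := by
  rcases le_total a b with h | h
  · rw [vol_symmDiff_le t a b ht h, abs_of_nonpos (by linarith), neg_sub]
  · rw [symmDiff_comm, vol_symmDiff_le t b a ht h, abs_of_nonneg (by linarith)]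

/-- For `L < U`, `t > 0`, `μ = U - L + 2t`, and `r` uniformly distributed on `[L - t, U + t]`,
for all `x, y ∈ [L, U]` the probability that `h_{r,t}(x) ≠ h_{r,t}(y)` equals
`2 · min(|x - y|, 2t) / μ`. -/
theorem bvHash_prob_ne
    {Ω : Type*} [MeasurableSpace Ω] (P : Measure Ω) [IsProbabilityMeasure P]
    (L U t μ : ℝ) (hLU : L < U) (ht : 0 < t) (hμ : μ = U - L + 2 * t)
    (r : Ω → ℝ) (hr : Measurable r)
    (hlaw : Measure.map r P = uniformIcc (L - t) (U + t))
    (x y : ℝ) (hx : x ∈ Set.Icc L U) (hy : y ∈ Set.Icc L U) :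
    P {ω | bvHash t (r ω) x ≠ bvHash t (r ω) y}
      = ENNReal.ofReal (2 * min |x - y| (2 * t) / μ) := by
  obtain ⟨hx1, hx2⟩ := hx
  obtain ⟨hy1, hy2⟩ := hy
  set S := symmDiff (Set.Icc (x-t) (x+t)) (Set.Icc (y-t) (y+t)) with hS
  have hSm : MeasurableSet S := measurableSet_Icc.symmDiff measurableSet_Icc
  have key : ∀ z w : ℝ, (z ∈ Set.Icc (w - t) (w + t)) ↔ (w ∈ Set.Icc (z - t) (z + t)) := by
    intro z w
    simp only [Set.mem_Icc]
    constructor <;> rintro ⟨h1, h2⟩ <;> exact ⟨by linarith, by linarith⟩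
  have hset : {ω | bvHash t (r ω) x ≠ bvHash t (r ω) y} = r ⁻¹' S := by
    ext ω
    simp only [Set.mem_setOf_eq, Set.mem_preimage, bvHash, hS, Set.mem_symmDiff,
      key x (r ω), key y (r ω)]
    by_cases hP : r ω ∈ Set.Icc (x - t) (x + t) <;>
      by_cases hQ : r ω ∈ Set.Icc (y - t) (y + t) <;> simp [hP, hQ]
  have hsub : S ⊆ Set.Icc (L - t) (U + t) := by
    refine symmDiff_le_sup.trans ?_
    apply Set.union_subset <;> exact Set.Icc_subset_Icc (by linarith) (by linarith)
  rw [hset, ← Measure.map_apply hr hSm, hlaw]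
  rw [uniformIcc, Measure.smul_apply, Measure.restrict_apply hSm,
    Set.inter_eq_self_of_subset_left hsub, vol_symmDiff t x y ht]
  have hμpos : 0 < μ := by rw [hμ]; linarith
  have : U + t - (L - t) = μ := by rw [hμ]; ring
  rw [this, ENNReal.ofReal_div_of_pos hμpos, smul_eq_mul, div_eq_mul_inv, mul_comm]
end

section
/- (Expected number of set components of DPBV) Fix reals L < U, t > 0 and ε > 0, and set μ = U − L + 2t. Let r_1, …, r_s be i.i.d. uniform on [L − t, U + t], and let the DPBV encoding of x ∈ [L, U] be the random vector whose i-th bit equals h_{r_i,t}(x) with probability e^ε/(e^ε + 1) and 1 − h_{r_i,t}(x) with probability 1/(e^ε + 1), independently across coordinates and independent of the r_i. Then the expected number w of set components of the DPBV encoding of x satisfies E[w] = s · ( (2t/μ) · (e^ε − 1)/(e^ε + 1) + 1/(e^ε + 1) ); in particular this expectation is the same for every x ∈ [L, U]. -/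
open MeasureTheory ProbabilityTheory Real

/-- A DPBV bit: the BV hash bit `bvHash t r x`, kept if the flip indicator is `0` and
flipped (`1 - bit`) if the flip indicator is `1`. -/
noncomputable def dpbvBit (t r x flip : ℝ) : ℕ :=
  if flip = 1 then 1 - bvHash t r x else bvHash t r x

/-!
A DPBV bit is the XOR `B + F - 2FB` of the BV bit `B = h_{r,t}(x)` and an independent flip
indicator `F`, so its mean is `p + q - 2pq = p (1 - 2q) + q` with `p = P(B = 1)` and
`q = P(F = 1) = 1/(e^ε + 1)`. Since `[x - t, x + t] ⊆ [L - t, U + t]`, the uniform law of `r`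
gives `p = 2t/μ` whatever `x ∈ [L, U]` is, and `1 - 2q = (e^ε - 1)/(e^ε + 1)`.
Linearity over the `s` coordinates finishes the proof.
-/

lemma natCast_bvHash_eq_indicator (t r x : ℝ) :
    (bvHash t r x : ℝ) = (Set.Icc (x - t) (x + t)).indicator 1 r := by
  by_cases h : r ∈ Set.Icc (x - t) (x + t)
  · have hx : x ∈ Set.Icc (r - t) (r + t) := ⟨by linarith [h.2], by linarith [h.1]⟩
    simp [bvHash, hx, h]
  · have hx : x ∉ Set.Icc (r - t) (r + t) := fun hx => h ⟨by linarith [hx.2], by linarith [hx.1]⟩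
    simp [bvHash, hx, h]

lemma measurable_natCast_bvHash (t x : ℝ) : Measurable fun r => (bvHash t r x : ℝ) := by
  simp only [natCast_bvHash_eq_indicator]
  exact measurable_const.indicator measurableSet_Icc

lemma bvHash_le_one (t r x : ℝ) : bvHash t r x ≤ 1 := by
  unfold bvHash
  split_ifs <;> omega

lemma dpbvBit_le_one (t r x flip : ℝ) : dpbvBit t r x flip ≤ 1 := by
  unfold dpbvBit
  split_ifs <;> grind [bvHash_le_one]

lemma natCast_dpbvBit {t r x flip : ℝ} (hflip : flip = 0 ∨ flip = 1) :
    (dpbvBit t r x flip : ℝ) = bvHash t r x + flip - 2 * (flip * bvHash t r x) := by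
  rcases hflip with rfl | rfl
  · simp [dpbvBit]
  · by_cases hx : x ∈ Set.Icc (r - t) (r + t) <;> simp [dpbvBit, bvHash, hx]; norm_num

lemma integral_bvHash_uniformIcc {a b t x : ℝ} (ht : 0 ≤ t) (ha : a ≤ x - t) (hb : x + t ≤ b) :
    ∫ r, (bvHash t r x : ℝ) ∂uniformIcc a b = 2 * t / (b - a) := by
  simp only [natCast_bvHash_eq_indicator]
  rw [integral_indicator_one measurableSet_Icc, measureReal_def, uniformIcc, Measure.smul_apply,
    Measure.restrict_apply measurableSet_Icc,
    Set.inter_eq_left.mpr (Set.Icc_subset_Icc ha hb), Real.volume_Icc, smul_eq_mul,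
    ENNReal.toReal_mul, ENNReal.toReal_inv, ENNReal.toReal_ofReal (by linarith),
    ENNReal.toReal_ofReal (by linarith)]
  ring

section Bits

variable {Ω : Type*} [MeasurableSpace Ω] {P : Measure Ω}

lemma integral_eq_measureReal_of_eq_zero_or_eq_one {F : Ω → ℝ} (hF : Measurable F)
    (hF01 : ∀ ω, F ω = 0 ∨ F ω = 1) : ∫ ω, F ω ∂P = P.real {ω | F ω = 1} := by
  have hF_eq : ∀ ω, F ω = {ω | F ω = 1}.indicator 1 ω := fun ω => by
    rcases hF01 ω with h | h <;> simp [h]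
  rw [integral_congr_ae (Filter.Eventually.of_forall hF_eq),
    integral_indicator_one (s := {ω | F ω = 1}) (hF (measurableSet_singleton 1))]

variable [IsProbabilityMeasure P] {R F : Ω → ℝ} (hR : Measurable R) (hF : Measurable F)
  (hF01 : ∀ ω, F ω = 0 ∨ F ω = 1)
include hR hF hF01

lemma integrable_dpbvBit (t x : ℝ) :
    Integrable (fun ω => (dpbvBit t (R ω) x (F ω) : ℝ)) P := by
  have hbit : (fun ω => (dpbvBit t (R ω) x (F ω) : ℝ))
      = fun ω => (bvHash t (R ω) x : ℝ) + F ω - 2 * (F ω * bvHash t (R ω) x) :=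
    funext fun ω => natCast_dpbvBit (hF01 ω)
  have hmeas : Measurable fun ω => (dpbvBit t (R ω) x (F ω) : ℝ) := by
    rw [hbit]
    have := (measurable_natCast_bvHash t x).comp hR
    fun_prop
  refine .of_bound hmeas.aestronglyMeasurable 1 (ae_of_all _ fun ω => ?_)
  simpa using dpbvBit_le_one t (R ω) x (F ω)

lemma integral_dpbvBit (hRF : IndepFun R F P) (t x : ℝ) :
    ∫ ω, (dpbvBit t (R ω) x (F ω) : ℝ) ∂P
      = (∫ r, (bvHash t r x : ℝ) ∂P.map R) + P.real {ω | F ω = 1}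
        - 2 * P.real {ω | F ω = 1} * ∫ r, (bvHash t r x : ℝ) ∂P.map R := by
  set B : Ω → ℝ := fun ω => (bvHash t (R ω) x : ℝ)
  have hB : Measurable B := (measurable_natCast_bvHash t x).comp hR
  have hBint : Integrable B P := .of_bound hB.aestronglyMeasurable 1 (ae_of_all _ fun ω => by
    simpa [B] using bvHash_le_one t (R ω) x)
  have hFint : Integrable F P := .of_bound hF.aestronglyMeasurable 1 (ae_of_all _ fun ω => by
    rcases hF01 ω with h | h <;> simp [h])
  have hFB : IndepFun F B P := (hRF.comp (measurable_natCast_bvHash t x) measurable_id).symm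
  have hEB : ∫ ω, B ω ∂P = ∫ r, (bvHash t r x : ℝ) ∂P.map R :=
    (integral_map hR.aemeasurable (measurable_natCast_bvHash t x).aestronglyMeasurable).symm
  rw [integral_congr_ae (Filter.Eventually.of_forall fun ω => natCast_dpbvBit (hF01 ω))]
  change ∫ ω, B ω + F ω - 2 * (F ω * B ω) ∂P = _
  rw [integral_sub (f := fun ω => B ω + F ω) (g := fun ω => 2 * (F ω * B ω)) (hBint.add hFint)
      ((hFB.integrable_mul hFint hBint).const_mul 2),
    integral_add hBint hFint, integral_const_mul,
    hFB.integral_fun_mul_eq_mul_integral hF.aestronglyMeasurable hB.aestronglyMeasurable,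
    integral_eq_measureReal_of_eq_zero_or_eq_one hF hF01, hEB]
  ring

end Bits

theorem dpbv_expected_set_components_general
    {Ω : Type*} [MeasurableSpace Ω] (P : Measure Ω) [IsProbabilityMeasure P]
    (L U t μ ε : ℝ) (ht : 0 < t) (hμ : μ = U - L + 2 * t)
    (s : ℕ) (r : Fin s → Ω → ℝ) (f : Fin s → Ω → ℝ)
    (hr : ∀ i, Measurable (r i)) (hf : ∀ i, Measurable (f i))
    (hrlaw : ∀ i, Measure.map (r i) P = uniformIcc (L - t) (U + t))
    (hf01 : ∀ i ω, f i ω = 0 ∨ f i ω = 1)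
    (hflaw : ∀ i, P {ω | f i ω = 1} = ENNReal.ofReal (1 / (exp ε + 1)))
    (hindep : iIndepFun (Sum.elim r f) P)
    (x : ℝ) (hx : x ∈ Set.Icc L U) :
    ∫ ω, (∑ i, (dpbvBit t (r i ω) x (f i ω) : ℝ)) ∂P
      = s * ((2 * t / μ) * (exp ε - 1) / (exp ε + 1) + 1 / (exp ε + 1)) := by
  have hcoord : ∀ i, ∫ ω, (dpbvBit t (r i ω) x (f i ω) : ℝ) ∂P
      = (2 * t / μ) * (exp ε - 1) / (exp ε + 1) + 1 / (exp ε + 1) := by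
    intro i
    have hindep_i : IndepFun (r i) (f i) P := by
      simpa using hindep.indepFun (i := Sum.inl i) (j := Sum.inr i) (by simp)
    have hwidth : U + t - (L - t) = μ := by rw [hμ]; ring
    rw [integral_dpbvBit (hr i) (hf i) (hf01 i) hindep_i, hrlaw i,
      integral_bvHash_uniformIcc ht.le (by linarith [hx.1]) (by linarith [hx.2]), hwidth,
      measureReal_def, hflaw i, ENNReal.toReal_ofReal (by positivity)]
    field_simp
    ring
  rw [integral_finsetSum _ fun i _ => integrable_dpbvBit (hr i) (hf i) (hf01 i) t x,
    Finset.sum_congr rfl fun i _ => hcoord i, Finset.sum_const, Finset.card_univ,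
    Fintype.card_fin, nsmul_eq_mul]

/-- (Expected number of set components of DPBV) For `L < U`, `t > 0`, `ε > 0`,
`μ = U - L + 2t`, `r 0, …, r (s-1)` i.i.d. uniform on `[L - t, U + t]`, and flip indicators
`f 0, …, f (s-1)` which are `1` with probability `1/(e^ε + 1)` and `0` otherwise (so each bit of
the DPBV encoding equals the BV bit with probability `e^ε/(e^ε + 1)`), all mutually
independent, the expected number of set components of the DPBV encoding of any `x ∈ [L, U]` is
`E[w] = s · ((2t/μ) · (e^ε − 1)/(e^ε + 1) + 1/(e^ε + 1))` (independent of `x`). -/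
theorem dpbv_expected_set_components
    {Ω : Type*} [MeasurableSpace Ω] (P : Measure Ω) [IsProbabilityMeasure P]
    (L U t μ ε : ℝ) (hLU : L < U) (ht : 0 < t) (hε : 0 < ε) (hμ : μ = U - L + 2 * t)
    (s : ℕ) (r : Fin s → Ω → ℝ) (f : Fin s → Ω → ℝ)
    (hr : ∀ i, Measurable (r i)) (hf : ∀ i, Measurable (f i))
    (hrlaw : ∀ i, Measure.map (r i) P = uniformIcc (L - t) (U + t))
    (hf01 : ∀ i ω, f i ω = 0 ∨ f i ω = 1)
    (hflaw : ∀ i, P {ω | f i ω = 1} = ENNReal.ofReal (1 / (exp ε + 1)))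
    (hindep : iIndepFun (Sum.elim r f) P)
    (x : ℝ) (hx : x ∈ Set.Icc L U) :
    ∫ ω, (∑ i, (dpbvBit t (r i ω) x (f i ω) : ℝ)) ∂P
      = s * ((2 * t / μ) * (exp ε - 1) / (exp ε + 1) + 1 / (exp ε + 1)) :=
  dpbv_expected_set_components_general P L U t μ ε ht hμ s r f hr hf hrlaw hf01 hflaw hindep x hx
end

section
/- (DPBV-Composition) Fix ε > 0 and s ≥ 1, and set δ = (e^ε/(e^ε + 1))^s − e^ε · (1/(e^ε + 1))^s. Then the DPBV randomization satisfies (ε, δ)-local differential privacy on pointwise outputs: for all b_A, b_B ∈ {0,1}^s with b_A ≠ b_B and every b' ∈ {0,1}^s, Pr[B' = b' | B = b_A] ≤ e^ε · Pr[B' = b' | B = b_B] + δ. -/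
open Real

/-- `dpbvProb ε b b'` is the probability `Pr[B' = b' | B = b]` that the DPBV randomization of
the bit vector `b` (each coordinate kept with probability `e^ε/(e^ε + 1)` and flipped with
probability `1/(e^ε + 1)`, independently across coordinates) outputs `b'`. By independence,
it is the product over coordinates of the per-coordinate probabilities. -/
noncomputable def dpbvProb (ε : ℝ) {s : ℕ} (b b' : Fin s → Bool) : ℝ :=
  ∏ i, if b' i = b i then exp ε / (exp ε + 1) else 1 / (exp ε + 1)

/-- (DPBV-Composition) For `ε > 0`, `s ≥ 1`, and
`δ = (e^ε/(e^ε + 1))^s − e^ε · (1/(e^ε + 1))^s`, the DPBV randomization satisfies `(ε, δ)`-local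
differential privacy on pointwise outputs: for all `b_A ≠ b_B` in `{0,1}^s` and every output
`b'`, `Pr[B' = b' | B = b_A] ≤ e^ε · Pr[B' = b' | B = b_B] + δ`. -/
theorem dpbv_composition
    (ε : ℝ) (hε : 0 < ε) (s : ℕ) (hs : 1 ≤ s) (δ : ℝ)
    (hδ : δ = (exp ε / (exp ε + 1)) ^ s - exp ε * (1 / (exp ε + 1)) ^ s) :
    ∀ (bA bB b' : Fin s → Bool), bA ≠ bB →
      dpbvProb ε bA b' ≤ exp ε * dpbvProb ε bB b' + δ := by
  intro bA bB b' _
  set p : ℝ := exp ε / (exp ε + 1) with hp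
  set q : ℝ := 1 / (exp ε + 1) with hq
  have hepos : (0:ℝ) < exp ε := exp_pos ε
  have hden : (0:ℝ) < exp ε + 1 := by linarith
  have hqpos : 0 < q := by positivity
  have hppos : 0 < p := by positivity
  have hqp : q ≤ p := by
    have h1 : (1:ℝ) < exp ε := by
      have := Real.add_one_le_exp ε; linarith
    exact div_le_div_of_nonneg_right h1.le hden.le
  have hA : dpbvProb ε bA b' ≤ p ^ s := by
    unfold dpbvProb
    calc (∏ i, if b' i = bA i then p else q)
        ≤ ∏ _i : Fin s, p := by
          apply Finset.prod_le_prod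
          · intro i _; split <;> positivity
          · intro i _; split
            · exact le_refl p
            · exact hqp
      _ = p ^ s := by simp
  have hB : q ^ s ≤ dpbvProb ε bB b' := by
    unfold dpbvProb
    calc q ^ s = ∏ _i : Fin s, q := by simp
      _ ≤ ∏ i, if b' i = bB i then p else q := by
          apply Finset.prod_le_prod
          · intro i _; exact hqpos.le
          · intro i _; split
            · exact hqp
            · exact le_refl q
  have : exp ε * q ^ s ≤ exp ε * dpbvProb ε bB b' :=
    mul_le_mul_of_nonneg_left hB hepos.le
  rw [hδ]
  linarith
end

section
/- Fix reals L < U, t > 0 and ε > 0, and set μ = U − L + 2t. Let x_1, x_2 ∈ [L, U] with d_E = |x_1 − x_2| ≤ 2t, and let d_H denote the Hamming distance between the DPBV encodings of x_1 and x_2. Then E[d_H] = 2s · (d_E/μ) · (e^{2ε} + 1)/(e^ε + 1)^2 + ( s − 2s · (d_E/μ) ) · 2e^ε/(e^ε + 1)^2. -/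
/-!
Coordinate `i` of the two encodings differs iff exactly one of two independent events occurs:
the hash bits differ, i.e. `r i` falls in the symmetric difference of `[x₁ - t, x₁ + t]` and
`[x₂ - t, x₂ + t]`, which has length `2 |x₁ - x₂|` because the intervals overlap (probability
`p = 2 d_E / μ`); or exactly one of the flips `f i`, `g i` fires (probability
`q = 2 e^ε / (e^ε + 1)²`). Hence each coordinate differs with probability `p (1 - q) + (1 - p) q`,
and linearity of expectation multiplies this by `s`; note `1 - q = (e^{2ε} + 1) / (e^ε + 1)²`.
-/

open MeasureTheory ProbabilityTheory Real

/-- The (random) Hamming distance between the DPBV encodings of `x₁` (with flips `f`) and `x₂`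
(with flips `g`): the number of coordinates in which they differ. -/
noncomputable def dpbvHammingDist (t : ℝ) {s : ℕ} {Ω : Type*}
    (r f g : Fin s → Ω → ℝ) (x₁ x₂ : ℝ) (ω : Ω) : ℕ :=
  (Finset.univ.filter fun i =>
    dpbvBit t (r i ω) x₁ (f i ω) ≠ dpbvBit t (r i ω) x₂ (g i ω)).card

section

open Set
open scoped symmDiff ENNReal

theorem measureReal_symmDiff_eq_add_sub_two_mul_inter {α : Type*} [MeasurableSpace α]
    {μ : Measure α} {s t : Set α} (hs : MeasurableSet s) (ht : MeasurableSet t)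
    (h₁ : μ s ≠ ∞ := by finiteness) (h₂ : μ t ≠ ∞ := by finiteness) :
    μ.real (s ∆ t) = μ.real s + μ.real t - 2 * μ.real (s ∩ t) := by
  have hst := measureReal_sdiff_add_inter (μ := μ) (s := s) ht h₁
  have hts := measureReal_sdiff_add_inter (μ := μ) (s := t) hs h₂
  rw [inter_comm] at hts
  rw [measureReal_symmDiff_eq hs ht h₁ h₂]
  linarith

theorem ProbabilityTheory.IndepSet.measureReal_symmDiff {Ω : Type*} [MeasurableSpace Ω]
    {μ : Measure Ω} [IsProbabilityMeasure μ] {s t : Set Ω} (h : IndepSet s t μ)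
    (hs : MeasurableSet s) (ht : MeasurableSet t) :
    μ.real (s ∆ t) = μ.real s * (1 - μ.real t) + (1 - μ.real s) * μ.real t := by
  have hinter : μ.real (s ∩ t) = μ.real s * μ.real t := by
    simp only [measureReal_def, h.measure_inter_eq_mul, ENNReal.toReal_mul]
  rw [measureReal_symmDiff_eq_add_sub_two_mul_inter hs ht, hinter]
  ring

theorem integral_card_filter {Ω ι : Type*} [MeasurableSpace Ω] {μ : Measure Ω}
    [IsFiniteMeasure μ] [Fintype ι] (p : ι → Ω → Prop) [∀ i ω, Decidable (p i ω)]
    (hp : ∀ i, MeasurableSet {ω | p i ω}) :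
    ∫ ω, ((Finset.univ.filter fun i => p i ω).card : ℝ) ∂μ = ∑ i, μ.real {ω | p i ω} := by
  have hcard : ∀ ω, ((Finset.univ.filter fun i => p i ω).card : ℝ)
      = ∑ i, {ω | p i ω}.indicator 1 ω := by
    intro ω
    rw [Finset.card_filter]
    push_cast
    refine Finset.sum_congr rfl fun i _ => ?_
    simp [Set.indicator_apply]
  simp_rw [hcard]
  rw [integral_finsetSum]
  · exact Finset.sum_congr rfl fun i _ => integral_indicator_one (hp i)
  · exact fun i _ => (integrable_const 1).indicator (hp i)

theorem uniformIcc_real_apply_of_subset {a b : ℝ} (hab : a ≤ b) {B : Set ℝ}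
    (hB : B ⊆ Icc a b) : (uniformIcc a b).real B = volume.real B / (b - a) := by
  rw [uniformIcc, measureReal_ennreal_smul_apply, ENNReal.toReal_inv,
    ENNReal.toReal_ofReal (by linarith), measureReal_def, Measure.restrict_eq_self _ hB,
    ← measureReal_def, inv_mul_eq_div]

theorem volume_real_Icc_symmDiff_Icc {x y t : ℝ} (hxy : |x - y| ≤ 2 * t) :
    volume.real (Icc (x - t) (x + t) ∆ Icc (y - t) (y + t)) = 2 * |x - y| := by
  have ht : 0 ≤ t := by linarith [abs_nonneg (x - y)]
  have hinter : volume.real (Icc (x - t) (x + t) ∩ Icc (y - t) (y + t)) = 2 * t - |x - y| := by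
    rw [Icc_inter_Icc, max_sub_sub_right, min_add_add_right, volume_real_Icc_of_le] <;>
      linarith [max_sub_min_eq_abs' x y]
  rw [measureReal_symmDiff_eq_add_sub_two_mul_inter measurableSet_Icc measurableSet_Icc
    measure_Icc_lt_top.ne measure_Icc_lt_top.ne, hinter, volume_real_Icc_of_le (by linarith),
    volume_real_Icc_of_le (by linarith)]
  ring

theorem bvHash_eq_ite (t r x : ℝ) :
    bvHash t r x = if r ∈ Icc (x - t) (x + t) then 1 else 0 := by
  have hmem : x ∈ Icc (r - t) (r + t) ↔ r ∈ Icc (x - t) (x + t) := by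
    simp only [mem_Icc]; constructor <;> rintro ⟨h₁, h₂⟩ <;> constructor <;> linarith
  simp only [bvHash, hmem]

theorem setOf_dpbvBit_ne {Ω : Type*} (t x y : ℝ) (r φ γ : Ω → ℝ) :
    {ω | dpbvBit t (r ω) x (φ ω) ≠ dpbvBit t (r ω) y (γ ω)}
      = (r ⁻¹' (Icc (x - t) (x + t) ∆ Icc (y - t) (y + t))) ∆ ({ω | φ ω = 1} ∆ {ω | γ ω = 1}) := by
  ext ω
  simp only [mem_ofPred_eq, mem_preimage, mem_symmDiff, dpbvBit, bvHash_eq_ite]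
  split_ifs <;> simp_all

theorem measurableSet_setOf_dpbvBit_ne {Ω : Type*} [MeasurableSpace Ω] (t x y : ℝ)
    {r φ γ : Ω → ℝ} (hr : Measurable r) (hφ : Measurable φ) (hγ : Measurable γ) :
    MeasurableSet {ω | dpbvBit t (r ω) x (φ ω) ≠ dpbvBit t (r ω) y (γ ω)} := by
  rw [setOf_dpbvBit_ne]
  exact (hr (measurableSet_Icc.symmDiff measurableSet_Icc)).symmDiff
    ((hφ (measurableSet_singleton 1)).symmDiff (hγ (measurableSet_singleton 1)))

theorem measureReal_dpbvBit_ne {Ω : Type*} [MeasurableSpace Ω] {P : Measure Ω}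
    [IsProbabilityMeasure P] {L U t x y q : ℝ} {r φ γ : Ω → ℝ}
    (hr : Measurable r) (hφ : Measurable φ) (hγ : Measurable γ)
    (hrlaw : P.map r = uniformIcc (L - t) (U + t))
    (hφq : P.real {ω | φ ω = 1} = q) (hγq : P.real {ω | γ ω = 1} = q)
    (hφγ : IndepFun φ γ P) (hrφγ : IndepFun r (fun ω => (φ ω, γ ω)) P)
    (hx : x ∈ Icc L U) (hy : y ∈ Icc L U) (hxy : |x - y| ≤ 2 * t) :
    P.real {ω | dpbvBit t (r ω) x (φ ω) ≠ dpbvBit t (r ω) y (γ ω)}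
      = 2 * |x - y| / (U - L + 2 * t) * (1 - 2 * q * (1 - q))
        + (1 - 2 * |x - y| / (U - L + 2 * t)) * (2 * q * (1 - q)) := by
  have ht : 0 ≤ t := by linarith [abs_nonneg (x - y)]
  have hS : MeasurableSet (Icc (x - t) (x + t) ∆ Icc (y - t) (y + t)) :=
    measurableSet_Icc.symmDiff measurableSet_Icc
  have hT : MeasurableSet ({p : ℝ × ℝ | p.1 = 1} ∆ {p | p.2 = 1}) :=
    (measurable_fst (measurableSet_singleton 1)).symmDiff
      (measurable_snd (measurableSet_singleton 1))
  have hSsub : Icc (x - t) (x + t) ∆ Icc (y - t) (y + t) ⊆ Icc (L - t) (U + t) :=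
    symmDiff_subset_union.trans <| union_subset
      (Icc_subset_Icc (by linarith [hx.1]) (by linarith [hx.2]))
      (Icc_subset_Icc (by linarith [hy.1]) (by linarith [hy.2]))
  have hhash : P.real (r ⁻¹' (Icc (x - t) (x + t) ∆ Icc (y - t) (y + t)))
      = 2 * |x - y| / (U - L + 2 * t) := by
    rw [← map_measureReal_apply hr hS, hrlaw,
      uniformIcc_real_apply_of_subset (by linarith [hx.1.trans hx.2]) hSsub,
      volume_real_Icc_symmDiff_Icc hxy]
    ring_nf
  have hflip : P.real ({ω | φ ω = 1} ∆ {ω | γ ω = 1}) = 2 * q * (1 - q) := by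
    have hind : IndepSet {ω | φ ω = 1} {ω | γ ω = 1} P :=
      (indepFun_iff_indepSet_preimage hφ hγ).1 hφγ _ _ (measurableSet_singleton 1)
        (measurableSet_singleton 1)
    rw [hind.measureReal_symmDiff (hφ (measurableSet_singleton 1))
      (hγ (measurableSet_singleton 1)), hφq, hγq]
    ring
  have hind : IndepSet (r ⁻¹' (Icc (x - t) (x + t) ∆ Icc (y - t) (y + t)))
      ({ω | φ ω = 1} ∆ {ω | γ ω = 1}) P :=
    (indepFun_iff_indepSet_preimage hr (hφ.prodMk hγ)).1 hrφγ _ _ hS hT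
  rw [setOf_dpbvBit_ne, hind.measureReal_symmDiff (hr hS) ((hφ.prodMk hγ) hT), hhash, hflip]

end

theorem dpbv_expected_hamming_distance_general
    {Ω : Type*} [MeasurableSpace Ω] (P : Measure Ω) [IsProbabilityMeasure P]
    (L U t μ ε : ℝ) (hμ : μ = U - L + 2 * t)
    (s : ℕ) (r f g : Fin s → Ω → ℝ)
    (hr : ∀ i, Measurable (r i)) (hf : ∀ i, Measurable (f i)) (hg : ∀ i, Measurable (g i))
    (hrlaw : ∀ i, Measure.map (r i) P = uniformIcc (L - t) (U + t))
    (hflaw : ∀ i, P {ω | f i ω = 1} = ENNReal.ofReal (1 / (exp ε + 1)))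
    (hglaw : ∀ i, P {ω | g i ω = 1} = ENNReal.ofReal (1 / (exp ε + 1)))
    (hindep : iIndepFun (Sum.elim r (Sum.elim f g)) P)
    (x₁ x₂ : ℝ) (hx₁ : x₁ ∈ Set.Icc L U) (hx₂ : x₂ ∈ Set.Icc L U)
    (hd : |x₁ - x₂| ≤ 2 * t) :
    ∫ ω, (dpbvHammingDist t r f g x₁ x₂ ω : ℝ) ∂P
      = 2 * s * (|x₁ - x₂| / μ) * (exp (2 * ε) + 1) / (exp ε + 1) ^ 2
        + (s - 2 * s * (|x₁ - x₂| / μ)) * (2 * exp ε) / (exp ε + 1) ^ 2 := by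
  have hmeas : ∀ j, Measurable (Sum.elim r (Sum.elim f g) j) := by
    rintro (i | i | i)
    exacts [hr i, hf i, hg i]
  have hlaw : ∀ {φ : Ω → ℝ}, P {ω | φ ω = 1} = ENNReal.ofReal (1 / (exp ε + 1)) →
      P.real {ω | φ ω = 1} = 1 / (exp ε + 1) := fun h => by
    rw [measureReal_def, h, ENNReal.toReal_ofReal (by positivity)]
  have hbit : ∀ i, P.real {ω | dpbvBit t (r i ω) x₁ (f i ω) ≠ dpbvBit t (r i ω) x₂ (g i ω)}
      = _ := fun i =>
    measureReal_dpbvBit_ne (hr i) (hf i) (hg i) (hrlaw i) (hlaw (hflaw i)) (hlaw (hglaw i))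
      (hindep.indepFun (i := .inr (.inl i)) (j := .inr (.inr i)) (by simp))
      (hindep.indepFun_prodMk hmeas (.inr (.inl i)) (.inr (.inr i)) (.inl i) (by simp)
        (by simp)).symm
      hx₁ hx₂ hd
  simp only [dpbvHammingDist]
  rw [integral_card_filter _ fun i => measurableSet_setOf_dpbvBit_ne t x₁ x₂ (hr i) (hf i) (hg i),
    Finset.sum_congr rfl fun i _ => hbit i, Finset.sum_const, Finset.card_univ, Fintype.card_fin,
    nsmul_eq_mul, ← hμ, two_mul ε, exp_add]
  field_simp
  ring

/-- For `L < U`, `t > 0`, `ε > 0`, `μ = U - L + 2t`, with `r 0, …, r (s-1)` i.i.d. uniform on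
`[L - t, U + t]`, flip indicators `f i, g i ∈ {0,1}` each equal to `1` with probability
`1/(e^ε + 1)`, all mutually independent, and `x₁, x₂ ∈ [L, U]` with `d_E = |x₁ - x₂| ≤ 2t`,
the Hamming distance `d_H` between the DPBV encodings of `x₁` and `x₂` satisfies
`E[d_H] = 2s·(d_E/μ)·(e^{2ε} + 1)/(e^ε + 1)² + (s − 2s·(d_E/μ))·2e^ε/(e^ε + 1)²`. -/
theorem dpbv_expected_hamming_distance
    {Ω : Type*} [MeasurableSpace Ω] (P : Measure Ω) [IsProbabilityMeasure P]
    (L U t μ ε : ℝ) (hLU : L < U) (ht : 0 < t) (hε : 0 < ε) (hμ : μ = U - L + 2 * t)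
    (s : ℕ) (hs : 1 ≤ s) (r f g : Fin s → Ω → ℝ)
    (hr : ∀ i, Measurable (r i)) (hf : ∀ i, Measurable (f i)) (hg : ∀ i, Measurable (g i))
    (hrlaw : ∀ i, Measure.map (r i) P = uniformIcc (L - t) (U + t))
    (hf01 : ∀ i ω, f i ω = 0 ∨ f i ω = 1) (hg01 : ∀ i ω, g i ω = 0 ∨ g i ω = 1)
    (hflaw : ∀ i, P {ω | f i ω = 1} = ENNReal.ofReal (1 / (exp ε + 1)))
    (hglaw : ∀ i, P {ω | g i ω = 1} = ENNReal.ofReal (1 / (exp ε + 1)))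
    (hindep : iIndepFun (Sum.elim r (Sum.elim f g)) P)
    (x₁ x₂ : ℝ) (hx₁ : x₁ ∈ Set.Icc L U) (hx₂ : x₂ ∈ Set.Icc L U)
    (hd : |x₁ - x₂| ≤ 2 * t) :
    ∫ ω, (dpbvHammingDist t r f g x₁ x₂ ω : ℝ) ∂P
      = 2 * s * (|x₁ - x₂| / μ) * (exp (2 * ε) + 1) / (exp ε + 1) ^ 2
        + (s - 2 * s * (|x₁ - x₂| / μ)) * (2 * exp ε) / (exp ε + 1) ^ 2 :=
  dpbv_expected_hamming_distance_general P L U t μ ε hμ s r f g hr hf hg hrlaw hflaw hglaw hindep x₁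
    x₂ hx₁ hx₂ hd
end
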